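/- arXiv:0801.1698 — 3 statements merged into one kernel-verified Lean document; each statement's English description precedes it below -/
import Mathlib

section
/- (Variant of de Finetti's Theorem.) Let K be a standard Borel space, S a countably infinite set partitioned into infinite subsets S₁ and S₂, and μ an exchangeable probability measure on K^S. Then the coordinate random variables π_s for s ∈ S₁ are conditionally independent given the σ-algebra generated by (π_s)_{s∈S₂}, and moreover for any bounded measurable f : K → ℝ the conditional expectations E_μ[f ∘ π_s | σ(π_{S₂})] agree almost surely for all s ∈ S₁. -/
/-!
Fix `s ∈ S₁` and enumerate `S₂` as `u₀, u₁, …`. By exchangeability the variables `f(π_{u_j})`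
have a common variance and a common pairwise covariance, so their running averages are Cauchy in
`L²(μ)` and converge to some `σ(π_{S₂})`-measurable `G`. Swapping `s` with a fresh `u_j` shows
that `G` and `f ∘ π_s` have the same integral over every set depending on finitely many
coordinates other than `s`; hence `G = E[f ∘ π_s | σ(π_{S ∖ {s}})]`, i.e. conditioning `f ∘ π_s`
on all other coordinates is the same as conditioning on `S₂`. Conditional independence follows by
peeling off one coordinate at a time, and the agreement of the one-coordinate conditional
expectations from the swap of `s` and `t`, which fixes every `σ(π_{S₂})`-measurable set.
-/

open MeasureTheory Filter Topology Finset
open scoped RealInnerProductSpace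

section Average

variable {E : Type*} [NormedAddCommGroup E] [InnerProductSpace ℝ E]

noncomputable def runningAverage (x : ℕ → E) (n : ℕ) : E :=
  ((n : ℝ) + 1)⁻¹ • ∑ j ∈ range (n + 1), x j

lemma inner_runningAverage_left (x : ℕ → E) (v : E) (n : ℕ) :
    ⟪v, runningAverage x n⟫ = ((n : ℝ) + 1)⁻¹ * ∑ j ∈ range (n + 1), ⟪v, x j⟫ := by
  rw [runningAverage, real_inner_smul_right, inner_sum]

variable {x : ℕ → E} {c d : ℝ}

lemma inner_sum_sum_of_inner_eq (hcov : ∀ j k, j ≠ k → ⟪x j, x k⟫ = c)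
    (hvar : ∀ j, ⟪x j, x j⟫ = d) (I J : Finset ℕ) :
    ⟪∑ j ∈ I, x j, ∑ k ∈ J, x k⟫ = #I * #J * c + #(I ∩ J) * (d - c) := by
  have hx : ∀ j k, ⟪x j, x k⟫ = c + if j = k then d - c else 0 := by
    intro j k
    split_ifs with h
    · rw [h, hvar]; ring
    · rw [hcov j k h, add_zero]
  simp_rw [sum_inner, inner_sum, hx, sum_add_distrib, sum_ite_eq, ← sum_filter, sum_const,
    filter_mem_eq_inter, nsmul_eq_mul]
  ring

lemma inner_runningAverage_of_le (hcov : ∀ j k, j ≠ k → ⟪x j, x k⟫ = c)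
    (hvar : ∀ j, ⟪x j, x j⟫ = d) {n m : ℕ} (hnm : n ≤ m) :
    ⟪runningAverage x n, runningAverage x m⟫ = c + (d - c) / ((m : ℝ) + 1) := by
  rw [runningAverage, runningAverage, real_inner_smul_left, real_inner_smul_right,
    inner_sum_sum_of_inner_eq hcov hvar,
    inter_eq_left.mpr (range_subset_range.mpr (Nat.succ_le_succ hnm))]
  simp only [card_range]
  push_cast
  field_simp

lemma norm_sub_runningAverage_sq (hcov : ∀ j k, j ≠ k → ⟪x j, x k⟫ = c)
    (hvar : ∀ j, ⟪x j, x j⟫ = d) {n m : ℕ} (hnm : n ≤ m) :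
    ‖runningAverage x n - runningAverage x m‖ ^ 2 =
      (d - c) * (((n : ℝ) + 1)⁻¹ - ((m : ℝ) + 1)⁻¹) := by
  rw [norm_sub_sq_real, ← real_inner_self_eq_norm_sq, ← real_inner_self_eq_norm_sq,
    inner_runningAverage_of_le hcov hvar hnm, inner_runningAverage_of_le hcov hvar le_rfl,
    inner_runningAverage_of_le hcov hvar le_rfl]
  ring

theorem cauchySeq_runningAverage_of_inner_eq (hcov : ∀ j k, j ≠ k → ⟪x j, x k⟫ = c)
    (hvar : ∀ j, ⟪x j, x j⟫ = d) : CauchySeq (runningAverage x) := by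
  have hdc : 0 ≤ d - c := by
    have := norm_sub_runningAverage_sq hcov hvar (Nat.zero_le 1)
    nlinarith [sq_nonneg ‖runningAverage x 0 - runningAverage x 1‖]
  have hdist : ∀ N n m, N ≤ n → n ≤ m →
      dist (runningAverage x n) (runningAverage x m) ≤ √((d - c) / ((N : ℝ) + 1)) := by
    intro N n m hNn hnm
    rw [dist_eq_norm, ← abs_norm]
    refine Real.abs_le_sqrt ?_
    rw [norm_sub_runningAverage_sq hcov hvar hnm, div_eq_mul_inv]
    have : ((n : ℝ) + 1)⁻¹ ≤ ((N : ℝ) + 1)⁻¹ := by gcongr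
    have : 0 ≤ ((m : ℝ) + 1)⁻¹ := by positivity
    nlinarith
  refine cauchySeq_of_le_tendsto_0 (fun N : ℕ => √((d - c) / ((N : ℝ) + 1)))
    (fun n m N hn hm => ?_) ?_
  · rcases le_total n m with hnm | hmn
    · exact hdist N n m hn hnm
    · rw [dist_comm]; exact hdist N m n hm hmn
  · have : Tendsto (fun N : ℕ => (d - c) / ((N : ℝ) + 1)) atTop (𝓝 0) :=
      tendsto_const_div_atTop_nhds_zero_nat (d - c) |>.comp (tendsto_add_atTop_nat 1) |>.congr
        fun N => by simp
    simpa using this.sqrt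

lemma Filter.Tendsto.cesaro_succ {y : ℕ → ℝ} {l : ℝ} (hy : Tendsto y atTop (𝓝 l)) :
    Tendsto (fun n : ℕ => ((n : ℝ) + 1)⁻¹ * ∑ j ∈ range (n + 1), y j) atTop (𝓝 l) := by
  simpa [Function.comp_def] using hy.cesaro.comp (tendsto_add_atTop_nat 1)

end Average

section CoordSigma

variable {S : Type*} (K : Type*) [MeasurableSpace K]

@[reducible] def coordSigma (A : Set S) : MeasurableSpace (S → K) :=
  MeasurableSpace.comap (fun ω (a : A) => ω a) MeasurableSpace.pi

def finiteCoordSets (A : Set S) : Set (Set (S → K)) :=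
  ⋃ F : {F : Finset S // ↑F ⊆ A}, {B | MeasurableSet[coordSigma K (F : Set S)] B}

variable {K} {A B : Set S}

lemma coordSigma_le_iff {m : MeasurableSpace (S → K)} :
    coordSigma K A ≤ m ↔ ∀ a ∈ A, Measurable[m] fun ω : S → K => ω a := by
  rw [coordSigma, ← measurable_iff_comap_le, measurable_pi_iff, Subtype.forall]

lemma measurable_coordSigma {a : S} (ha : a ∈ A) :
    Measurable[coordSigma K A] fun ω : S → K => ω a :=
  coordSigma_le_iff.mp le_rfl a ha

lemma coordSigma_mono (h : A ⊆ B) : coordSigma K A ≤ coordSigma K B :=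
  coordSigma_le_iff.mpr fun _ ha => measurable_coordSigma (h ha)

lemma coordSigma_le_pi : coordSigma K A ≤ MeasurableSpace.pi :=
  coordSigma_le_iff.mpr fun a _ => measurable_pi_apply a

lemma coordSigma_eq_iSup_finset :
    coordSigma K A = ⨆ F : {F : Finset S // ↑F ⊆ A}, coordSigma K (F : Set S) := by
  refine le_antisymm (coordSigma_le_iff.mpr fun a ha => ?_) (iSup_le fun F => coordSigma_mono F.2)
  exact (measurable_coordSigma (Finset.mem_coe.mpr (mem_singleton_self a))).mono
    (le_iSup_of_le ⟨{a}, by simpa using ha⟩ le_rfl) le_rfl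

lemma coordSigma_eq_generateFrom :
    coordSigma K A = MeasurableSpace.generateFrom (finiteCoordSets K A) := by
  rw [coordSigma_eq_iSup_finset, ← MeasurableSpace.generateFrom_iUnion_measurableSet]
  rfl

lemma isPiSystem_finiteCoordSets : IsPiSystem (finiteCoordSets K A) := by
  classical
  refine isPiSystem_iUnion_of_directed_le _
    (fun F => @MeasurableSpace.isPiSystem_measurableSet _ (coordSigma K (F : Set S)))
    fun F G => ⟨⟨F.1 ∪ G.1, by simpa using And.intro F.2 G.2⟩, ?_, ?_⟩ <;>
    exact fun B hB => coordSigma_mono (by simp) _ hB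

lemma comp_perm_mem_iff {g : Equiv.Perm S} (hg : ∀ a ∈ A, g a = a) {W : Set (S → K)}
    (hW : MeasurableSet[coordSigma K A] W) (ω : S → K) : (fun t => ω (g t)) ∈ W ↔ ω ∈ W := by
  obtain ⟨T, -, rfl⟩ := hW
  simp only [Set.mem_preimage]
  congr! 2 with a
  rw [hg a a.2]

end CoordSigma

section Exchangeable

variable {S K : Type*} [MeasurableSpace K]

def IsExchangeable (μ : Measure (S → K)) : Prop :=
  ∀ g : Equiv.Perm S, {x | g x ≠ x}.Finite → μ.map (fun ω t => ω (g t)) = μ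

variable {μ : Measure (S → K)}

lemma IsExchangeable.integral_comp_perm (hμ : IsExchangeable μ) {g : Equiv.Perm S}
    (hg : {x | g x ≠ x}.Finite) (h : (S → K) → ℝ) :
    ∫ ω, h (fun t => ω (g t)) ∂μ = ∫ ω, h ω ∂μ := by
  let e : (S → K) ≃ᵐ (S → K) := MeasurableEquiv.arrowCongr' g.symm (MeasurableEquiv.refl K)
  exact MeasurePreserving.integral_comp' (f := e) ⟨e.measurable, hμ g hg⟩ h

lemma finite_setOf_swap_apply_ne [DecidableEq S] (a b : S) : {x | Equiv.swap a b x ≠ x}.Finite :=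
  (Set.toFinite {a, b}).subset fun x hx => by
    simpa using (Equiv.swap_apply_ne_self_iff.mp hx).2

lemma IsExchangeable.setIntegral_coord_eq (hμ : IsExchangeable μ) {A : Set S} {s t : S}
    (hs : s ∉ A) (ht : t ∉ A) {W : Set (S → K)} (hW : MeasurableSet[coordSigma K A] W)
    (f : K → ℝ) : ∫ ω in W, f (ω s) ∂μ = ∫ ω in W, f (ω t) ∂μ := by
  classical
  have hfix : ∀ a ∈ A, Equiv.swap s t a = a := fun a ha =>
    Equiv.swap_apply_of_ne_of_ne (ne_of_mem_of_not_mem ha hs) (ne_of_mem_of_not_mem ha ht)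
  rw [← integral_indicator (coordSigma_le_pi _ hW), ← integral_indicator (coordSigma_le_pi _ hW),
    ← hμ.integral_comp_perm (finite_setOf_swap_apply_ne s t)]
  congr 1 with ω
  simp only [Set.indicator, comp_perm_mem_iff hfix hW, Equiv.swap_apply_left]

lemma IsExchangeable.integral_coord_eq (hμ : IsExchangeable μ) (s t : S) (f : K → ℝ) :
    ∫ ω, f (ω s) ∂μ = ∫ ω, f (ω t) ∂μ := by
  simpa using hμ.setIntegral_coord_eq (Set.notMem_empty s) (Set.notMem_empty t)
    (@MeasurableSet.univ _ (coordSigma K ∅)) f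

lemma IsExchangeable.integral_coord_pair_eq (hμ : IsExchangeable μ) {a b p q : S}
    (hab : a ≠ b) (hpq : p ≠ q) (φ : K → K → ℝ) :
    ∫ ω, φ (ω a) (ω b) ∂μ = ∫ ω, φ (ω p) (ω q) ∂μ := by
  classical
  -- `swap a p` moves `b` to `b'`, so `g` sends `a ↦ p` and `b ↦ q`
  set b' := Equiv.swap a p b
  have hpb' : p ≠ b' := fun h => hab (by simpa [b'] using congrArg (Equiv.swap a p) h)
  let g := (Equiv.swap a p).trans (Equiv.swap b' q)
  have hga : g a = p := by simp [g, Equiv.swap_apply_of_ne_of_ne hpb' hpq]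
  have hgb : g b = q := by simp [g, b']
  have hg : {x | g x ≠ x}.Finite :=
    ((finite_setOf_swap_apply_ne a p).union (finite_setOf_swap_apply_ne b' q)).subset fun x hx => by
      by_contra h
      simp only [Set.mem_union, Set.mem_ofPred_eq, not_or, not_not] at h
      exact hx (by simp [g, h.1, h.2])
  rw [← hμ.integral_comp_perm hg]
  simp only [hga, hgb]

end Exchangeable

lemma ae_eq_condExp_of_forall_setIntegral_eq_of_isPiSystem {Ω : Type*} {m m₀ : MeasurableSpace Ω}
    {μ : Measure Ω} [IsFiniteMeasure μ] (hm : m ≤ m₀) {P : Set (Set Ω)} (hP : IsPiSystem P)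
    (hgen : m = MeasurableSpace.generateFrom P) {f g : Ω → ℝ} (hf : Integrable f μ)
    (hg : Integrable g μ) (hgm : AEStronglyMeasurable[m] g μ)
    (huniv : ∫ ω, g ω ∂μ = ∫ ω, f ω ∂μ) (hset : ∀ B ∈ P, ∫ ω in B, g ω ∂μ = ∫ ω in B, f ω ∂μ) :
    g =ᵐ[μ] μ[f | m] := by
  refine ae_eq_condExp_of_forall_setIntegral_eq hm hf (fun _ _ _ => hg.integrableOn)
    (fun B hB _ => ?_) hgm
  induction B, hB using MeasurableSpace.induction_on_inter hgen hP with
  | empty => simp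
  | basic B hB => exact hset B hB
  | compl B hB ih =>
    have hg' := integral_add_compl (hm B hB) hg
    have hf' := integral_add_compl (hm B hB) hf
    linarith [ih (measure_lt_top μ B)]
  | iUnion B hdisj hB ih =>
    rw [integral_iUnion (fun i => hm _ (hB i)) hdisj hg.integrableOn,
      integral_iUnion (fun i => hm _ (hB i)) hdisj hf.integrableOn]
    exact tsum_congr fun i => ih i (measure_lt_top μ _)

section CoordLp

variable {S K : Type*} [MeasurableSpace K] {μ : Measure (S → K)} [IsFiniteMeasure μ]

lemma memLp_coord_of_bounded {f : K → ℝ} (hf : Measurable f) {C : ℝ} (hC : ∀ x, |f x| ≤ C)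
    (p : ENNReal) (t : S) : MemLp (fun ω : S → K => f (ω t)) p μ :=
  .of_bound (hf.comp (measurable_pi_apply t)).aestronglyMeasurable C (ae_of_all _ fun _ => hC _)

lemma integrable_coord_of_bounded {f : K → ℝ} (hf : Measurable f) {C : ℝ} (hC : ∀ x, |f x| ≤ C)
    (t : S) : Integrable (fun ω : S → K => f (ω t)) μ :=
  (memLp_coord_of_bounded hf hC 1 t).integrable le_rfl

variable {f : K → ℝ} (hf : Measurable f) {C : ℝ} (hC : ∀ x, |f x| ≤ C)

noncomputable def coordLp (t : S) : Lp ℝ 2 μ :=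
  (memLp_coord_of_bounded hf hC 2 t).toLp

lemma coordLp_ae_eq (t : S) : (coordLp (μ := μ) hf hC t : (S → K) → ℝ) =ᵐ[μ] fun ω => f (ω t) :=
  MemLp.coeFn_toLp _

lemma inner_coordLp (t t' : S) :
    ⟪coordLp (μ := μ) hf hC t, coordLp hf hC t'⟫ = ∫ ω, f (ω t) * f (ω t') ∂μ := by
  rw [L2.inner_def]
  refine integral_congr_ae ?_
  filter_upwards [coordLp_ae_eq hf hC t, coordLp_ae_eq hf hC t'] with ω h h'
  simp [h, h', mul_comm]

lemma IsExchangeable.cauchySeq_runningAverage_coordLp (hμ : IsExchangeable μ) {u : ℕ → S}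
    (hu : Function.Injective u) :
    CauchySeq (runningAverage fun j => coordLp (μ := μ) hf hC (u j)) := by
  refine cauchySeq_runningAverage_of_inner_eq (c := ∫ ω, f (ω (u 0)) * f (ω (u 1)) ∂μ)
    (d := ∫ ω, f (ω (u 0)) * f (ω (u 0)) ∂μ) (fun j k hjk => ?_) (fun j => ?_) <;>
    rw [inner_coordLp]
  · exact hμ.integral_coord_pair_eq (hu.ne hjk) (hu.ne zero_ne_one) fun y z => f y * f z
  · exact hμ.integral_coord_eq (u j) (u 0) fun y => f y * f y

end CoordLp

section Key

variable {S K : Type*} [MeasurableSpace K] {μ : Measure (S → K)} [IsFiniteMeasure μ]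

lemma IsExchangeable.exists_lp_setIntegral_eq (hμ : IsExchangeable μ) {f : K → ℝ}
    (hf : Measurable f) {C : ℝ} (hC : ∀ x, |f x| ≤ C) {A : Set S} (hA : A.Infinite) (s : S) :
    ∃ G : Lp ℝ 2 μ, AEStronglyMeasurable[coordSigma K A] G μ ∧
      ∀ (F : Finset S) (W : Set (S → K)), MeasurableSet[coordSigma K (F : Set S)] W → s ∉ F →
        ∫ ω in W, G ω ∂μ = ∫ ω in W, f (ω s) ∂μ := by
  set e := Set.Infinite.natEmbedding A hA
  set u : ℕ → S := fun n => e n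
  have hu : Function.Injective u := Subtype.val_injective.comp e.injective
  set x : ℕ → Lp ℝ 2 μ := fun j => coordLp hf hC (u j)
  obtain ⟨G, hG⟩ := cauchySeq_tendsto_of_complete (hμ.cauchySeq_runningAverage_coordLp hf hC hu)
  refine ⟨G, ?_, fun F W hW hsF => ?_⟩
  · have hxA : ∀ j, x j ∈ lpMeas ℝ ℝ (coordSigma K A) 2 μ := fun j =>
      mem_lpMeas_iff_aestronglyMeasurable.mpr ⟨_, (hf.comp (measurable_coordSigma
        (e j).2)).stronglyMeasurable, coordLp_ae_eq hf hC (u j)⟩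
    exact (isClosed_aestronglyMeasurable coordSigma_le_pi).mem_of_tendsto hG
      (Eventually.of_forall fun n => mem_lpMeas_iff_aestronglyMeasurable.mp
        ((lpMeas ℝ ℝ (coordSigma K A) 2 μ).smul_mem _ (sum_mem fun j _ => hxA j)))
  · have hWm : MeasurableSet W := coordSigma_le_pi _ hW
    set ind := indicatorConstLp 2 hWm (measure_ne_top μ W) (1 : ℝ)
    have hlim : Tendsto (fun n => ⟪ind, runningAverage x n⟫) atTop (𝓝 (∫ ω in W, G ω ∂μ)) := by
      rw [← L2.inner_indicatorConstLp_one hWm (measure_ne_top μ W)]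
      exact tendsto_const_nhds.inner hG
    have hfresh : ∀ᶠ j in atTop, u j ∉ F := by
      rw [← Nat.cofinite_eq_atTop]
      exact hu.tendsto_cofinite.eventually F.finite_toSet.eventually_cofinite_notMem
    -- once `u j ∉ F`, the swap of `u j` and `s` fixes `W`
    have hconst : Tendsto (fun j => ⟪ind, x j⟫) atTop (𝓝 (∫ ω in W, f (ω s) ∂μ)) :=
      tendsto_const_nhds.congr' <| hfresh.mono fun j hj => by
        dsimp only
        rw [L2.inner_indicatorConstLp_one, integral_congr_ae
          (ae_restrict_of_ae (coordLp_ae_eq hf hC (u j))), hμ.setIntegral_coord_eq hj hsF hW]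
    refine tendsto_nhds_unique hlim ?_
    simp only [inner_runningAverage_left]
    exact hconst.cesaro_succ

theorem IsExchangeable.condExp_coord_compl_ae_eq (hμ : IsExchangeable μ) {A : Set S}
    (hA : A.Infinite) {s : S} (hs : s ∉ A) {f : K → ℝ} (hf : Measurable f) {C : ℝ}
    (hC : ∀ x, |f x| ≤ C) :
    μ[fun ω => f (ω s) | coordSigma K {s}ᶜ] =ᵐ[μ] μ[fun ω => f (ω s) | coordSigma K A] := by
  obtain ⟨G, hGA, hGW⟩ := hμ.exists_lp_setIntegral_eq hf hC hA s
  have hAs : A ⊆ {s}ᶜ := Set.subset_compl_singleton_iff.mpr hs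
  have hGint : Integrable G μ := (Lp.memLp G).integrable one_le_two
  have hG : (G : (S → K) → ℝ) =ᵐ[μ] μ[fun ω => f (ω s) | coordSigma K {s}ᶜ] :=
    ae_eq_condExp_of_forall_setIntegral_eq_of_isPiSystem coordSigma_le_pi
      isPiSystem_finiteCoordSets coordSigma_eq_generateFrom (integrable_coord_of_bounded hf hC s)
      hGint (hGA.mono (coordSigma_mono hAs))
      (by simpa using hGW ∅ Set.univ MeasurableSet.univ (notMem_empty s)) fun B hB => by
        obtain ⟨⟨F, hF⟩, hB⟩ := Set.mem_iUnion.mp hB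
        exact hGW F B hB fun h => hF h rfl
  calc μ[fun ω => f (ω s) | coordSigma K {s}ᶜ] =ᵐ[μ] G := hG.symm
    _ =ᵐ[μ] μ[G | coordSigma K A] :=
      (condExp_of_aestronglyMeasurable' coordSigma_le_pi hGA hGint).symm
    _ =ᵐ[μ] μ[μ[fun ω => f (ω s) | coordSigma K {s}ᶜ] | coordSigma K A] := condExp_congr_ae hG
    _ =ᵐ[μ] μ[fun ω => f (ω s) | coordSigma K A] :=
      condExp_condExp_of_le (coordSigma_mono hAs) coordSigma_le_pi

lemma exists_abs_prod_le {ι α : Type*} (t : Finset ι) {f : ι → α → ℝ}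
    (hf : ∀ i, ∃ C, ∀ x, |f i x| ≤ C) : ∃ C, ∀ x, |∏ i ∈ t, f i x| ≤ C := by
  choose C hC using hf
  refine ⟨∏ i ∈ t, |C i|, fun x => ?_⟩
  rw [abs_prod]
  exact prod_le_prod (fun _ _ => abs_nonneg _) fun i _ => (hC i x).trans (le_abs_self _)

theorem IsExchangeable.condExp_prod_ae_eq (hμ : IsExchangeable μ) {A : Set S} (hA : A.Infinite)
    {n : ℕ} (s : Fin n → S) (hs : Function.Injective s) (hsA : ∀ i, s i ∉ A)
    (f : Fin n → K → ℝ) (hf : ∀ i, Measurable (f i)) (hfb : ∀ i, ∃ C, ∀ x, |f i x| ≤ C) :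
    μ[fun ω => ∏ i, f i (ω (s i)) | coordSigma K A]
      =ᵐ[μ] fun ω => ∏ i, μ[fun ω' => f i (ω' (s i)) | coordSigma K A] ω := by
  induction n with
  | zero => simp [condExp_const coordSigma_le_pi]
  | succ n ih =>
    set l := Fin.last n
    set P : (S → K) → ℝ := fun ω => ∏ i : Fin n, f i.castSucc (ω (s i.castSucc))
    set g : (S → K) → ℝ := fun ω => f l (ω (s l))
    have hAl : A ⊆ {s l}ᶜ := Set.subset_compl_singleton_iff.mpr (hsA l)
    have hP : StronglyMeasurable[coordSigma K {s l}ᶜ] P :=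
      (Finset.measurable_prod _ fun i _ => (hf _).comp <|
        measurable_coordSigma (hs.ne (Fin.castSucc_lt_last i).ne)).stronglyMeasurable
    obtain ⟨D, hD⟩ := exists_abs_prod_le univ fun i : Fin n =>
      (hfb i.castSucc).imp fun C hC (ω : S → K) => hC (ω (s i.castSucc))
    have hPae : AEStronglyMeasurable P μ := (hP.mono coordSigma_le_pi).aestronglyMeasurable
    have hPD : ∀ᵐ ω ∂μ, ‖P ω‖ ≤ D := ae_of_all _ hD
    obtain ⟨C, hC⟩ := hfb l
    have hg : Integrable g μ := integrable_coord_of_bounded (hf l) hC (s l)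
    calc μ[fun ω => ∏ i, f i (ω (s i)) | coordSigma K A] = μ[P * g | coordSigma K A] := by
          congr 1 with ω
          exact Fin.prod_univ_castSucc _
      _ =ᵐ[μ] μ[μ[P * g | coordSigma K {s l}ᶜ] | coordSigma K A] :=
          (condExp_condExp_of_le (coordSigma_mono hAl) coordSigma_le_pi).symm
      _ =ᵐ[μ] μ[P * μ[g | coordSigma K A] | coordSigma K A] := condExp_congr_ae <|
          (condExp_mul_of_stronglyMeasurable_left hP (hg.bdd_mul hPae hPD) hg).trans <|
            EventuallyEq.rfl.mul (hμ.condExp_coord_compl_ae_eq hA (hsA l) (hf l) hC)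
      _ =ᵐ[μ] μ[P | coordSigma K A] * μ[g | coordSigma K A] :=
          condExp_mul_of_stronglyMeasurable_right stronglyMeasurable_condExp
            (integrable_condExp.bdd_mul hPae hPD) (.of_bound hPae D hPD)
      _ =ᵐ[μ] fun ω => ∏ i, μ[fun ω' => f i (ω' (s i)) | coordSigma K A] ω := by
          filter_upwards [ih (fun i => s i.castSucc) (hs.comp (Fin.castSucc_injective n))
            (fun i => hsA _) (fun i => f i.castSucc) (fun i => hf _) (fun i => hfb _)] with ω hω
          rw [Fin.prod_univ_castSucc, Pi.mul_apply, hω]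

theorem IsExchangeable.condExp_coord_ae_eq (hμ : IsExchangeable μ) {A : Set S} {s t : S}
    (hs : s ∉ A) (ht : t ∉ A) {f : K → ℝ} (hfs : Integrable (fun ω => f (ω s)) μ)
    (hft : Integrable (fun ω => f (ω t)) μ) :
    μ[fun ω => f (ω s) | coordSigma K A] =ᵐ[μ] μ[fun ω => f (ω t) | coordSigma K A] := by
  refine ae_eq_condExp_of_forall_setIntegral_eq coordSigma_le_pi hft
    (fun _ _ _ => integrable_condExp.integrableOn) (fun B hB _ => ?_)
    stronglyMeasurable_condExp.aestronglyMeasurable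
  rw [setIntegral_condExp coordSigma_le_pi hfs hB]
  exact hμ.setIntegral_coord_eq hs ht hB f

end Key

theorem deFinetti_variant_general
    {K : Type*} [MeasurableSpace K]
    {S : Type*}
    (S₁ S₂ : Set S) (hdisj : Disjoint S₁ S₂)
    (h₂ : S₂.Infinite)
    (μ : Measure (S → K)) [IsProbabilityMeasure μ]
    (hμ : ∀ g : Equiv.Perm S, {x | g x ≠ x}.Finite →
      Measure.map (fun ω : S → K => fun t => ω (g t)) μ = μ)
    -- the σ-algebra generated by the coordinates indexed by `S₂`
    (m₂ : MeasurableSpace (S → K))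
    (hm₂ : m₂ = MeasurableSpace.comap (fun ω : S → K => fun s : S₂ => ω s) inferInstance) :
    -- conditional independence of the coordinates in `S₁` over `σ(π_{S₂})`
    (∀ (n : ℕ) (s : Fin n → S), Function.Injective s → (∀ i, s i ∈ S₁) →
      ∀ f : Fin n → K → ℝ, (∀ i, Measurable (f i)) → (∀ i, ∃ C, ∀ x, |f i x| ≤ C) →
        μ[fun ω => ∏ i, f i (ω (s i)) | m₂]
          =ᵐ[μ] fun ω => ∏ i, (μ[fun ω' => f i (ω' (s i)) | m₂]) ω) ∧
    -- the one-coordinate conditional expectations agree for all vertices of `S₁`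
    (∀ (s t : S), s ∈ S₁ → t ∈ S₁ → ∀ f : K → ℝ, Measurable f → (∃ C, ∀ x, |f x| ≤ C) →
      μ[fun ω => f (ω s) | m₂] =ᵐ[μ] μ[fun ω => f (ω t) | m₂]) := by
  subst hm₂
  have hμ' : IsExchangeable μ := hμ
  refine ⟨fun n s hs hsS₁ f hf hfb => hμ'.condExp_prod_ae_eq h₂ s hs
    (fun i => hdisj.notMem_of_mem_left (hsS₁ i)) f hf hfb, fun s t hs ht f hf hfb => ?_⟩
  obtain ⟨C, hC⟩ := hfb
  exact hμ'.condExp_coord_ae_eq (hdisj.notMem_of_mem_left hs) (hdisj.notMem_of_mem_left ht)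
    (integrable_coord_of_bounded hf hC s) (integrable_coord_of_bounded hf hC t)

/-- variant of de Finetti's Theorem: if `μ` is an exchangeable law on `K^S` and
`S = S₁ ∪ S₂` is a partition into two infinite subsets, then the coordinates indexed by `S₁`
are conditionally independent given the σ-algebra generated by the coordinates in `S₂`, and all
the conditional expectations `E[f ∘ π_s | σ(π_{S₂})]` for `s ∈ S₁` agree a.s. -/
theorem deFinetti_variant
    {K : Type*} [MeasurableSpace K] [StandardBorelSpace K]
    {S : Type*} [Countable S]
    (S₁ S₂ : Set S) (hdisj : Disjoint S₁ S₂) (hunion : S₁ ∪ S₂ = Set.univ)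
    (h₁ : S₁.Infinite) (h₂ : S₂.Infinite)
    (μ : Measure (S → K)) [IsProbabilityMeasure μ]
    (hμ : ∀ g : Equiv.Perm S, {x | g x ≠ x}.Finite →
      Measure.map (fun ω : S → K => fun t => ω (g t)) μ = μ)
    -- the σ-algebra generated by the coordinates indexed by `S₂`
    (m₂ : MeasurableSpace (S → K))
    (hm₂ : m₂ = MeasurableSpace.comap (fun ω : S → K => fun s : S₂ => ω s) inferInstance) :
    -- conditional independence of the coordinates in `S₁` over `σ(π_{S₂})`
    (∀ (n : ℕ) (s : Fin n → S), Function.Injective s → (∀ i, s i ∈ S₁) →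
      ∀ f : Fin n → K → ℝ, (∀ i, Measurable (f i)) → (∀ i, ∃ C, ∀ x, |f i x| ≤ C) →
        μ[fun ω => ∏ i, f i (ω (s i)) | m₂]
          =ᵐ[μ] fun ω => ∏ i, (μ[fun ω' => f i (ω' (s i)) | m₂]) ω) ∧
    -- the one-coordinate conditional expectations agree for all vertices of `S₁`
    (∀ (s t : S), s ∈ S₁ → t ∈ S₁ → ∀ f : K → ℝ, Measurable f → (∃ C, ∀ x, |f x| ≤ C) →
      μ[fun ω => f (ω s) | m₂] =ᵐ[μ] μ[fun ω => f (ω t) | m₂]) :=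
  deFinetti_variant_general S₁ S₂ hdisj h₂ μ hμ m₂ hm₂
end

section
/- (Relative independence of edge colours.) Let K be a standard Borel space, S countably infinite partitioned into infinite S₁, S₂, and μ an exchangeable probability measure on K^{(S choose 2)}. Let 𝕋 be the σ-algebra generated by all maps π_s^{Z₁} for s ∈ S₁, where π_s^{Z₁} records the colours of all edges with at least one endpoint in {s} ∪ S₂ that meet {s} ∪ S₂. Then the edge random variables π_e for e ∈ (S₁ choose 2) are relatively independent over 𝕋: for any finite F ⊆ (S₁ choose 2) and bounded measurable functions f_e : K → ℝ, E_μ[∏_{e∈F} f_e ∘ π_e | 𝕋] = ∏_{e∈F} E_μ[f_e ∘ π_e | 𝕋] almost surely. -/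
open MeasureTheory

/-- The coordinate-permuting action of a permutation `g` of the vertex set on coloured graphs:
`(τ^g ω)_e = ω_{g(e)}`. -/
def edgeAct {S : Type*} [DecidableEq S] (g : Equiv.Perm S) {K : Type*}
    (ω : {e : Finset S // e.card = 2} → K) : {e : Finset S // e.card = 2} → K :=
  fun e => ω ⟨e.1.image g, by rw [Finset.card_image_of_injective _ g.injective, e.2]⟩

/-- The auxiliary projection `π_s^{Z₁}` recording the colours of all edges meeting `{s} ∪ S₂`. -/
def auxProj {S : Type*} [DecidableEq S] {K : Type*} (S₁ S₂ : Set S)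
    (hdisj : Disjoint S₁ S₂) (s : S) (hs : s ∈ S₁)
    (ω : {e : Finset S // e.card = 2} → K) :
    (S₂ → K) × ({a : Finset S // a.card = 2 ∧ (↑a : Set S) ⊆ S₂} → K) :=
  (fun t => ω ⟨{s, (t : S)}, Finset.card_pair (by
      intro h
      exact Set.disjoint_left.mp hdisj hs (by rw [h]; exact t.2))⟩,
   fun a => ω ⟨a.1, a.2.1⟩)

/-!
Fix an edge `e₀ ⊆ S₁` and a finite set `F` of other edges. Since `S₁` and `S₂` are countably
infinite there is a permutation `g` of `S` fixing `e₀` pointwise and mapping `S₂`, together with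
every vertex of `F` outside `e₀`, into `S₂`. Every edge meeting `S₂` is `𝕋`-measurable, so the shift
`τ^g` pulls `𝒜 = 𝕋 ∨ σ(π_e : e ∈ F)` back into `𝕋`; it fixes `π_{e₀}`, and it preserves `μ` because
exchangeability under finitary permutations passes to all permutations through the
finite-dimensional marginals. For `Y = E[f ∘ π_{e₀} | 𝒜]` this gives
`‖Y‖₂ = ‖Y ∘ τ^g‖₂ = ‖E[E[f ∘ π_{e₀} | 𝕋] | (τ^g)⁻¹ 𝒜]‖₂ ≤ ‖E[Y | 𝕋]‖₂ ≤ ‖Y‖₂`, so `Y` is its own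
projection onto `L²(𝕋)`: `E[f ∘ π_{e₀} | 𝒜] = E[f ∘ π_{e₀} | 𝕋]`. Relative independence follows by
induction on the number of edges, pulling the already conditioned factors out of the conditional
expectation.
-/

namespace MeasureTheory
variable {Ω : Type*} {m m₁ m₂ m0 : MeasurableSpace Ω} {μ : Measure Ω} [IsFiniteMeasure μ]

theorem integral_sq_sub_condExp (hm : m ≤ m0) {Y : Ω → ℝ} (hY : MemLp Y 2 μ) :
    ∫ ω, (Y ω - μ[Y|m] ω) ^ 2 ∂μ = ∫ ω, Y ω ^ 2 ∂μ - ∫ ω, μ[Y|m] ω ^ 2 ∂μ := by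
  set W := μ[Y|m]
  have hW : MemLp W 2 μ := hY.condExp one_le_two
  have hWY : Integrable (fun ω => W ω * Y ω) μ := hW.integrable_mul hY
  have hcross : ∫ ω, W ω * Y ω ∂μ = ∫ ω, W ω ^ 2 ∂μ := calc
    ∫ ω, W ω * Y ω ∂μ = ∫ ω, μ[W * Y|m] ω ∂μ := (integral_condExp hm).symm
    _ = ∫ ω, W ω ^ 2 ∂μ := integral_congr_ae <|
      (condExp_mul_of_stronglyMeasurable_left stronglyMeasurable_condExp hWY
        (hY.integrable one_le_two)).mono fun ω hω => hω.trans (sq _).symm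
  have hexpand : (fun ω => (Y ω - W ω) ^ 2) =
      fun ω => Y ω ^ 2 - (2 * (W ω * Y ω) - W ω ^ 2) := by
    ext ω; ring
  have hrest : Integrable (fun ω => 2 * (W ω * Y ω) - W ω ^ 2) μ :=
    (hWY.const_mul 2).sub hW.integrable_sq
  rw [hexpand, integral_sub hY.integrable_sq hrest,
    integral_sub (hWY.const_mul 2) hW.integrable_sq, integral_const_mul, hcross]
  ring

theorem integral_sq_condExp_le (hm : m ≤ m0) {Y : Ω → ℝ} (hY : MemLp Y 2 μ) :
    ∫ ω, μ[Y|m] ω ^ 2 ∂μ ≤ ∫ ω, Y ω ^ 2 ∂μ := by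
  have hnonneg : 0 ≤ ∫ ω, (Y ω - μ[Y|m] ω) ^ 2 ∂μ := integral_nonneg fun ω => sq_nonneg _
  linarith [integral_sq_sub_condExp hm hY]

theorem ae_eq_condExp_of_integral_sq_le (hm : m ≤ m0) {Y : Ω → ℝ} (hY : MemLp Y 2 μ)
    (h : ∫ ω, Y ω ^ 2 ∂μ ≤ ∫ ω, μ[Y|m] ω ^ 2 ∂μ) : Y =ᵐ[μ] μ[Y|m] := by
  have hdiff : MemLp (Y - μ[Y|m]) 2 μ := hY.sub (hY.condExp one_le_two)
  have hzero : ∫ ω, (Y ω - μ[Y|m] ω) ^ 2 ∂μ = 0 :=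
    le_antisymm (by linarith [integral_sq_sub_condExp hm hY])
      (integral_nonneg fun ω => sq_nonneg _)
  filter_upwards [(integral_eq_zero_iff_of_nonneg (fun ω => sq_nonneg _)
    hdiff.integrable_sq).mp hzero] with ω hω
  exact sub_eq_zero.mp (pow_eq_zero_iff two_ne_zero |>.mp hω)

theorem MeasurePreserving.condExp_comp {β : Type*} {m mβ : MeasurableSpace β} {ν : Measure β}
    (hm : m ≤ mβ) {T : Ω → β} (hT : MeasurePreserving T μ ν) {X : β → ℝ} (hX : Integrable X ν) :
    (fun ω => ν[X|m] (T ω)) =ᵐ[μ] μ[fun ω => X (T ω) | m.comap T] := by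
  have : IsFiniteMeasure ν := hT.map_eq ▸ inferInstance
  have hmT : m.comap T ≤ m0 := (MeasurableSpace.comap_mono hm).trans hT.measurable.comap_le
  refine ae_eq_condExp_of_forall_setIntegral_eq hmT (hT.integrable_comp_of_integrable hX)
    (fun s _ _ => (hT.integrable_comp_of_integrable integrable_condExp).integrableOn)
    (fun s hs _ => ?_) <|
    (stronglyMeasurable_condExp.comp_measurable
      (Measurable.of_comap_le le_rfl)).aestronglyMeasurable
  obtain ⟨A, hA, rfl⟩ := hs
  have hpull : ∀ g : β → ℝ, AEStronglyMeasurable g ν →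
      ∫ x in T ⁻¹' A, g (T x) ∂μ = ∫ y in A, g y ∂ν := fun g hg => by
    rw [← setIntegral_map (hm _ hA) (by rwa [hT.map_eq]) hT.aemeasurable, hT.map_eq]
  rw [hpull _ (stronglyMeasurable_condExp.mono hm).aestronglyMeasurable, hpull _ hX.1,
    setIntegral_condExp hm hX hA]

theorem MeasurePreserving.condExp_ae_eq_of_comap_le {T : Ω → Ω} (hT : MeasurePreserving T μ μ)
    (h₁₂ : m₁ ≤ m₂) (h₂ : m₂ ≤ m0) (hTm : m₂.comap T ≤ m₁) {X : Ω → ℝ} (hX : MemLp X 2 μ)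
    (hXT : ∀ ω, X (T ω) = X ω) : μ[X|m₂] =ᵐ[μ] μ[X|m₁] := by
  set Y := μ[X|m₂]
  have hY : MemLp Y 2 μ := hX.condExp one_le_two
  have hYT : (fun ω => Y (T ω)) =ᵐ[μ] μ[μ[X|m₁] | m₂.comap T] := by
    have h := hT.condExp_comp h₂ (hX.integrable one_le_two)
    simp only [hXT] at h
    exact h.trans (condExp_condExp_of_le hTm (h₁₂.trans h₂)).symm
  have hX₁ : μ[X|m₁] =ᵐ[μ] μ[Y|m₁] := (condExp_condExp_of_le h₁₂ h₂).symm
  have henergy : ∫ ω, Y ω ^ 2 ∂μ ≤ ∫ ω, μ[Y|m₁] ω ^ 2 ∂μ := calc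
    ∫ ω, Y ω ^ 2 ∂μ = ∫ ω, Y (T ω) ^ 2 ∂μ := by
      rw [← integral_map (f := fun y => Y y ^ 2) hT.aemeasurable
        (by rw [hT.map_eq]; exact hY.1.pow 2), hT.map_eq]
    _ = ∫ ω, μ[μ[X|m₁] | m₂.comap T] ω ^ 2 ∂μ := integral_congr_ae (hYT.fun_comp (· ^ 2))
    _ ≤ ∫ ω, μ[X|m₁] ω ^ 2 ∂μ :=
      integral_sq_condExp_le (hTm.trans (h₁₂.trans h₂)) (hX.condExp one_le_two)
    _ = ∫ ω, μ[Y|m₁] ω ^ 2 ∂μ := integral_congr_ae (hX₁.fun_comp (· ^ 2))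
  exact (ae_eq_condExp_of_integral_sq_le (h₁₂.trans h₂) hY henergy).trans hX₁.symm

theorem condExp_prod_ae_eq_prod_condExp (hm : m ≤ m0) {ι : Type*} {X : ι → Ω → ℝ}
    (hX : ∀ i, Measurable (X i)) (hbd : ∀ i, ∃ C, ∀ ω, |X i ω| ≤ C)
    (hind : ∀ i (t : Finset ι), i ∉ t →
      μ[X i | m ⊔ ⨆ j ∈ t, MeasurableSpace.comap (X j) inferInstance] =ᵐ[μ] μ[X i|m])
    (s : Finset ι) :
    μ[fun ω => ∏ i ∈ s, X i ω | m] =ᵐ[μ] fun ω => ∏ i ∈ s, μ[X i|m] ω := by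
  classical
  choose C hC using hbd
  induction s using Finset.induction_on with
  | empty => simp [condExp_const hm]
  | insert a s ha ih =>
    set 𝒜 := m ⊔ ⨆ j ∈ s, MeasurableSpace.comap (X j) inferInstance
    set P := fun ω => ∏ i ∈ s, X i ω
    have h𝒜 : 𝒜 ≤ m0 := sup_le hm (iSup₂_le fun j _ => (hX j).comap_le)
    have hP𝒜 : StronglyMeasurable[𝒜] P := by
      refine (Finset.measurable_prod s fun j hj => Measurable.of_comap_le ?_).stronglyMeasurable
      exact le_sup_of_le_right (le_iSup₂_of_le j hj le_rfl)
    have hPbd : ∀ᵐ ω ∂μ, ‖P ω‖ ≤ ∏ i ∈ s, C i := .of_forall fun ω => by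
      rw [Real.norm_eq_abs, Finset.abs_prod]
      exact Finset.prod_le_prod (fun i _ => abs_nonneg _) fun i _ => hC i ω
    have hPm : AEStronglyMeasurable[m0] P μ := (hP𝒜.mono h𝒜).aestronglyMeasurable
    have hXa : Integrable (X a) μ :=
      .of_bound (hX a).aestronglyMeasurable (C a) (.of_forall fun ω => hC a ω)
    have hP : Integrable P μ := .of_bound hPm _ hPbd
    calc μ[fun ω => ∏ i ∈ insert a s, X i ω | m]
        = μ[X a * P | m] := by simp_rw [Finset.prod_insert ha]; rfl
      _ =ᵐ[μ] μ[μ[X a * P | 𝒜] | m] := (condExp_condExp_of_le le_sup_left h𝒜).symm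
      _ =ᵐ[μ] μ[μ[X a | 𝒜] * P | m] := condExp_congr_ae <|
          condExp_mul_of_stronglyMeasurable_right hP𝒜 (hXa.mul_bdd hPm hPbd) hXa
      _ =ᵐ[μ] μ[μ[X a | m] * P | m] := condExp_congr_ae <| (hind a s ha).mul .rfl
      _ =ᵐ[μ] μ[X a | m] * μ[P | m] := condExp_mul_of_stronglyMeasurable_left
          stronglyMeasurable_condExp (integrable_condExp.mul_bdd hPm hPbd) hP
      _ =ᵐ[μ] fun ω => ∏ i ∈ insert a s, μ[X i|m] ω := by
          filter_upwards [ih] with ω hω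
          rw [Finset.prod_insert ha, Pi.mul_apply, hω]

end MeasureTheory

section Permutations

open Set Equiv

theorem exists_perm_finite_eqOn {α : Type*} (g : Perm α) {A : Set α} (hA : A.Finite) :
    ∃ g' : Perm α, {x | g' x ≠ x}.Finite ∧ EqOn g' g A := by
  classical
  have hB : (A ∪ g '' A).Finite := hA.union (hA.image g)
  have : Finite ↥(A ∪ g '' A) := hB.to_subtype
  let f : {b : ↥(A ∪ g '' A) | (b : α) ∈ A} ↪ ↥(A ∪ g '' A) :=
    ⟨fun b => ⟨g b, Or.inr (mem_image_of_mem g b.2)⟩, fun x y h => by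
      simpa [Subtype.ext_iff] using h⟩
  obtain ⟨σ, hσ⟩ := Cardinal.extend_function_finite f ⟨Equiv.refl _⟩
  refine ⟨Perm.ofSubtype σ, hB.subset fun x hx => ?_, fun x hx => ?_⟩
  · by_contra hxB
    exact hx (Perm.ofSubtype_apply_of_not_mem σ hxB)
  · rw [Perm.ofSubtype_apply_of_mem σ (Or.inl hx)]
    exact congrArg Subtype.val (hσ ⟨⟨x, Or.inl hx⟩, hx⟩)

theorem exists_perm_mapsTo {α : Type*} [Countable α] {A B : Set α}
    (hA : A.Infinite) (hB : B.Infinite) (hA' : Aᶜ.Infinite) (hB' : Bᶜ.Infinite) :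
    ∃ g : Perm α, MapsTo g A B := by
  classical
  have := hA.to_subtype; have := hB.to_subtype; have := hA'.to_subtype; have := hB'.to_subtype
  obtain ⟨e⟩ : Nonempty (A ≃ B) := inferInstance
  obtain ⟨f⟩ : Nonempty (↥Aᶜ ≃ ↥Bᶜ) := inferInstance
  exact ⟨Equiv.subtypeCongr e f, fun x hx => by simp [Equiv.subtypeCongr, hx]⟩

theorem exists_perm_eqOn_id_mapsTo {α : Type*} [Countable α] {E A B : Set α}
    (hAE : Disjoint A E) (hBE : Disjoint B E) (hA : A.Infinite) (hB : B.Infinite)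
    (hA' : (A ∪ E)ᶜ.Infinite) (hB' : (B ∪ E)ᶜ.Infinite) :
    ∃ g : Perm α, EqOn g id E ∧ MapsTo g A B := by
  classical
  have hrange : Eᶜ ⊆ range ((↑) : ↥Eᶜ → α) := Subtype.range_coe.ge
  have hinf : ∀ {C : Set α}, Disjoint C E → C.Infinite → (C ∪ E)ᶜ.Infinite →
      (((↑) : ↥Eᶜ → α) ⁻¹' C).Infinite ∧ (((↑) : ↥Eᶜ → α) ⁻¹' C)ᶜ.Infinite :=
    fun hCE hC hC' => ⟨hC.preimage (hCE.subset_compl_right.trans hrange),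
      (hC'.preimage ((compl_subset_compl.mpr subset_union_right).trans hrange)).mono <| by
        rw [← preimage_compl]; exact preimage_mono (compl_subset_compl.mpr subset_union_left)⟩
  obtain ⟨σ, hσ⟩ := exists_perm_mapsTo (hinf hAE hA hA').1 (hinf hBE hB hB').1
    (hinf hAE hA hA').2 (hinf hBE hB hB').2
  refine ⟨Perm.ofSubtype σ, fun x hx => Perm.ofSubtype_apply_of_not_mem σ (not_not.mpr hx),
    fun x hx => ?_⟩
  have hxE : x ∉ E := hAE.notMem_of_mem_left hx
  rw [Perm.ofSubtype_apply_of_mem σ hxE]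
  exact hσ (show (⟨x, hxE⟩ : ↥Eᶜ) ∈ _ from hx)

theorem exists_perm_eqOn_id_mapsTo_union {α : Type*} [Countable α] {E V B : Set α}
    (hE : E.Finite) (hV : V.Finite) (hVE : Disjoint V E) (hBE : Disjoint B E)
    (hB : B.Infinite) (hB' : Bᶜ.Infinite) :
    ∃ g : Perm α, EqOn g id E ∧ MapsTo g (B ∪ V) B := by
  have hcompl : ∀ W : Set α, W.Finite → (B ∪ W)ᶜ.Infinite := fun W hW => by
    rw [compl_union]; exact hB'.sdiff hW
  exact exists_perm_eqOn_id_mapsTo (disjoint_union_left.mpr ⟨hBE, hVE⟩) hBE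
    (hB.mono subset_union_left) hB (by rw [union_assoc]; exact hcompl _ (hV.union hE))
    (hcompl _ hE)

end Permutations

section ColouredGraph

open Set Equiv

abbrev Edge (S : Type*) := {e : Finset S // e.card = 2}

theorem Edge.exists_mem_notMem_of_ne {S : Type*} {c c' : Edge S} (h : c ≠ c') :
    ∃ v ∈ c.1, v ∉ c'.1 :=
  Finset.not_subset.mp fun hsub =>
    h (Subtype.ext (Finset.eq_of_subset_of_card_le hsub (by rw [c.2, c'.2])))

variable {S : Type*} [DecidableEq S] {K : Type*}

theorem edgeAct_apply_eq_of_eqOn {g g' : Perm S} {c : Edge S} (h : EqOn g g' c.1)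
    (ω : Edge S → K) : edgeAct g ω c = edgeAct g' ω c :=
  congrArg ω (Subtype.ext (Finset.image_congr h))

variable [MeasurableSpace K]

theorem measurable_edgeAct (g : Perm S) : Measurable (edgeAct (K := K) g) :=
  measurable_pi_lambda _ fun _ => measurable_pi_apply _

theorem measurePreserving_edgeAct {μ : Measure (Edge S → K)} [IsFiniteMeasure μ]
    (hμ : ∀ g : Perm S, {x | g x ≠ x}.Finite → μ.map (edgeAct g) = μ) (g : Perm S) :
    MeasurePreserving (edgeAct g) μ μ := by
  refine ⟨measurable_edgeAct g, IsProjectiveLimit.unique (P := fun I => μ.map I.restrict)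
    (fun I => ?_) fun I => rfl⟩
  obtain ⟨g', hg'fin, hg'⟩ := exists_perm_finite_eqOn g (I.biUnion Subtype.val).finite_toSet
  have hI : I.restrict ∘ edgeAct g = I.restrict ∘ edgeAct (K := K) g' := by
    ext ω c
    exact edgeAct_apply_eq_of_eqOn
      (fun x hx => (hg' (Finset.mem_biUnion.mpr ⟨c, c.2, hx⟩)).symm) ω
  rw [Measure.map_map (Finset.measurable_restrict I) (measurable_edgeAct g), hI,
    ← Measure.map_map (Finset.measurable_restrict I) (measurable_edgeAct g'), hμ g' hg'fin]

variable (S₁ S₂ : Set S) (hdisj : Disjoint S₁ S₂)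

abbrev auxSigma : MeasurableSpace (Edge S → K) :=
  ⨆ (s : S) (hs : s ∈ S₁), MeasurableSpace.comap (auxProj S₁ S₂ hdisj s hs) inferInstance

theorem measurable_auxProj_comp {Ω : Type*} {m : MeasurableSpace Ω} {Φ : Ω → Edge S → K}
    (hΦ : ∀ c : Edge S, (↑c.1 ∩ S₂).Nonempty → Measurable[m] fun x => Φ x c)
    (s : S) (hs : s ∈ S₁) :
    Measurable[m] fun x => auxProj S₁ S₂ hdisj s hs (Φ x) := by
  refine .prodMk (measurable_pi_lambda _ fun t => hΦ _ ⟨t, ?_, t.2⟩)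
    (measurable_pi_lambda _ fun a => ?_)
  · exact Finset.mem_coe.mpr (Finset.mem_insert_of_mem (Finset.mem_singleton_self _))
  · obtain ⟨z, hz⟩ := Finset.card_pos.mp (a.2.1 ▸ two_pos)
    exact hΦ _ ⟨z, hz, a.2.2 hz⟩

theorem auxSigma_le_pi : auxSigma (K := K) S₁ S₂ hdisj ≤ MeasurableSpace.pi :=
  iSup₂_le fun s hs =>
    (measurable_auxProj_comp S₁ S₂ hdisj (Φ := id) (fun c _ => measurable_pi_apply c) s hs).comap_le

theorem measurable_auxSigma_eval (hunion : S₁ ∪ S₂ = univ) (hS₁ : S₁.Nonempty) {c : Edge S}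
    (hc : (↑c.1 ∩ S₂).Nonempty) :
    Measurable[auxSigma S₁ S₂ hdisj] fun ω : Edge S → K => ω c := by
  have hproj : ∀ s (hs : s ∈ S₁),
      Measurable[auxSigma S₁ S₂ hdisj] (auxProj (K := K) S₁ S₂ hdisj s hs) := fun s hs =>
    Measurable.of_comap_le (le_iSup₂ (f := fun s hs =>
      MeasurableSpace.comap (auxProj (K := K) S₁ S₂ hdisj s hs) inferInstance) s hs)
  obtain ⟨t, htc, ht⟩ := hc
  by_cases hcS₂ : (↑c.1 : Set S) ⊆ S₂
  · obtain ⟨s, hs⟩ := hS₁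
    exact ((measurable_pi_apply ⟨c.1, c.2, hcS₂⟩).comp measurable_snd).comp (hproj s hs)
  · obtain ⟨u, huc, hu⟩ := not_subset.mp hcS₂
    have hu₁ : u ∈ S₁ := (hunion ▸ mem_univ u : u ∈ S₁ ∪ S₂).resolve_right hu
    have hcut : c.1 = {u, t} := (Finset.eq_of_subset_of_card_le
      (Finset.insert_subset_iff.mpr ⟨huc, Finset.singleton_subset_iff.mpr htc⟩)
      (by rw [c.2, Finset.card_pair (ne_of_mem_of_not_mem ht hu).symm])).symm
    have heval : (fun ω : Edge S → K => ω c) =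
        fun ω => (auxProj S₁ S₂ hdisj u hu₁ ω).1 ⟨t, ht⟩ := by
      ext ω; exact congrArg ω (Subtype.ext hcut)
    rw [heval]
    exact ((measurable_pi_apply _).comp measurable_fst).comp (hproj u hu₁)

theorem measurable_auxSigma_edgeAct_eval (hunion : S₁ ∪ S₂ = univ) (hS₁ : S₁.Nonempty)
    {g : Perm S} {c : Edge S} (hc : ∃ v ∈ c.1, g v ∈ S₂) :
    Measurable[auxSigma S₁ S₂ hdisj] fun ω : Edge S → K => edgeAct g ω c :=
  let ⟨v, hv, hgv⟩ := hc
  measurable_auxSigma_eval S₁ S₂ hdisj hunion hS₁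
    ⟨g v, Finset.mem_coe.mpr (Finset.mem_image_of_mem g hv), hgv⟩

theorem comap_edgeAct_auxSigma_le (hunion : S₁ ∪ S₂ = univ) (hS₁ : S₁.Nonempty) {g : Perm S}
    (hg : MapsTo g S₂ S₂) :
    (auxSigma S₁ S₂ hdisj).comap (edgeAct (K := K) g) ≤ auxSigma S₁ S₂ hdisj := by
  simp only [auxSigma, MeasurableSpace.comap_iSup, MeasurableSpace.comap_comp]
  exact iSup₂_le fun s hs => Measurable.comap_le <| measurable_auxProj_comp S₁ S₂ hdisj
    (fun c ⟨t, htc, ht⟩ => measurable_auxSigma_edgeAct_eval S₁ S₂ hdisj hunion hS₁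
      ⟨t, htc, hg ht⟩) s hs

theorem condExp_eval_ae_eq_condExp_auxSigma [Countable S] (hunion : S₁ ∪ S₂ = univ)
    (h₁ : S₁.Infinite) (h₂ : S₂.Infinite) {μ : Measure (Edge S → K)} [IsFiniteMeasure μ]
    (hμ : ∀ g : Perm S, {x | g x ≠ x}.Finite → μ.map (edgeAct g) = μ)
    {e₀ : Edge S} (he₀ : ↑e₀.1 ⊆ S₁) {F : Finset (Edge S)} (he₀F : e₀ ∉ F)
    {𝒜 : MeasurableSpace (Edge S → K)} (h𝕋𝒜 : auxSigma S₁ S₂ hdisj ≤ 𝒜)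
    (h𝒜 : 𝒜 ≤ auxSigma S₁ S₂ hdisj ⊔ ⨆ c ∈ F, MeasurableSpace.comap (fun ω => ω c) inferInstance)
    {f : K → ℝ} (hf : Measurable f) (hbd : ∃ C, ∀ x, |f x| ≤ C) :
    μ[fun ω => f (ω e₀) | 𝒜] =ᵐ[μ] μ[fun ω => f (ω e₀) | auxSigma S₁ S₂ hdisj] := by
  set V : Set S := (⋃ c ∈ F, (↑c.1 : Set S)) \ ↑e₀.1
  have hV : V.Finite := (F.finite_toSet.biUnion fun c _ => c.1.finite_toSet).sdiff
  obtain ⟨g, hg₀, hg⟩ := exists_perm_eqOn_id_mapsTo_union e₀.1.finite_toSet hV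
    disjoint_sdiff_left (hdisj.symm.mono_right he₀) h₂ (h₁.mono hdisj.subset_compl_right)
  have hS₁ : S₁.Nonempty := h₁.nonempty
  have hgF : ∀ c ∈ F, ∃ v ∈ c.1, g v ∈ S₂ := fun c hc => by
    obtain ⟨v, hvc, hve₀⟩ := Edge.exists_mem_notMem_of_ne (ne_of_mem_of_not_mem hc he₀F)
    exact ⟨v, hvc, hg (Or.inr ⟨mem_biUnion hc hvc, hve₀⟩)⟩
  have hcomap : 𝒜.comap (edgeAct g) ≤ auxSigma S₁ S₂ hdisj := by
    refine (MeasurableSpace.comap_mono h𝒜).trans ?_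
    rw [MeasurableSpace.comap_sup]
    refine sup_le (comap_edgeAct_auxSigma_le S₁ S₂ hdisj hunion hS₁ fun x hx => hg (Or.inl hx)) ?_
    simp only [MeasurableSpace.comap_iSup, MeasurableSpace.comap_comp]
    exact iSup₂_le fun c hc =>
      (measurable_auxSigma_edgeAct_eval S₁ S₂ hdisj hunion hS₁ (hgF c hc)).comap_le
  have hfix : ∀ ω : Edge S → K, edgeAct g ω e₀ = ω e₀ := fun ω =>
    congrArg ω (Subtype.ext ((Finset.image_congr hg₀).trans Finset.image_id))
  obtain ⟨C, hC⟩ := hbd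
  refine (measurePreserving_edgeAct hμ g).condExp_ae_eq_of_comap_le h𝕋𝒜
    (h𝒜.trans (sup_le (auxSigma_le_pi S₁ S₂ hdisj)
      (iSup₂_le fun c _ => (measurable_pi_apply c).comap_le))) hcomap
    (MemLp.of_bound (hf.comp (measurable_pi_apply e₀)).aestronglyMeasurable C
      (.of_forall fun ω => (Real.norm_eq_abs _).trans_le (hC _)))
    fun ω => congrArg f (hfix ω)

end ColouredGraph

/-- relative independence of edge colours: for an exchangeable random
`K`-coloured graph `μ` on `S = S₁ ∪ S₂` (both infinite), the edge variables `π_e`,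
`e ∈ (S₁ choose 2)`, are relatively independent over the σ-algebra
`𝕋 = ⋁_{s∈S₁} σ(π_s^{Z₁})` generated by the auxiliary projections. -/
theorem edge_colours_relatively_independent
    {K : Type*} [MeasurableSpace K]
    {S : Type*} [DecidableEq S] [Countable S]
    (S₁ S₂ : Set S) (hdisj : Disjoint S₁ S₂) (hunion : S₁ ∪ S₂ = Set.univ)
    (h₁ : S₁.Infinite) (h₂ : S₂.Infinite)
    (μ : Measure ({e : Finset S // e.card = 2} → K)) [IsProbabilityMeasure μ]
    (hμ : ∀ g : Equiv.Perm S, {x | g x ≠ x}.Finite → Measure.map (edgeAct g) μ = μ)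
    (𝕋 : MeasurableSpace ({e : Finset S // e.card = 2} → K))
    (h𝕋 : 𝕋 = ⨆ (s : S) (hs : s ∈ S₁),
      MeasurableSpace.comap (auxProj S₁ S₂ hdisj s hs) inferInstance)
    (n : ℕ) (e : Fin n → {e : Finset S // e.card = 2})
    (hinj : Function.Injective e) (he : ∀ i, (↑(e i).1 : Set S) ⊆ S₁)
    (f : Fin n → K → ℝ) (hf : ∀ i, Measurable (f i)) (hbd : ∀ i, ∃ C, ∀ x, |f i x| ≤ C) :
    μ[fun ω => ∏ i, f i (ω (e i)) | 𝕋]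
      =ᵐ[μ] fun ω => ∏ i, (μ[fun ω' => f i (ω' (e i)) | 𝕋]) ω := by
  obtain rfl : 𝕋 = auxSigma S₁ S₂ hdisj := h𝕋
  refine condExp_prod_ae_eq_prod_condExp (auxSigma_le_pi S₁ S₂ hdisj)
    (fun i => (hf i).comp (measurable_pi_apply (e i)))
    (fun i => (hbd i).imp fun C hC ω => hC _) (fun i t hit => ?_) Finset.univ
  refine condExp_eval_ae_eq_condExp_auxSigma S₁ S₂ hdisj hunion h₁ h₂ hμ (he i)
    (hinj.mem_finset_image.not.mpr hit) le_sup_left (sup_le_sup_left ?_ _) (hf i) (hbd i)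
  exact iSup₂_le fun j hj => le_iSup₂_of_le (e j) (Finset.mem_image_of_mem e hj)
    ((hf j).comp (Measurable.of_comap_le le_rfl)).comap_le
end

section
/- (Gowers–Cauchy–Schwarz in the bipartite case.) Let μ be a probability measure on K^{S₁×S₂} invariant under separate finitely-supported permutations of two countably infinite sets S₁ and S₂, and let f, g, h, ℓ ∈ L^∞(K). Choose distinct s, s' ∈ S₁ and distinct t, t' ∈ S₂. Then |∫ (f∘π_{(s,t)})(g∘π_{(s,t')})(h∘π_{(s',t)})(ℓ∘π_{(s',t')}) dμ| ≤ ‖f‖_{U}‖g‖_{U}‖h‖_{U}‖ℓ‖_{U}, where ‖f‖_U := (∫ ∏_{η∈{1,2}²} f∘π_{w_η} dμ)^{1/4} with w_{(1,1)}=(s,t), w_{(1,2)}=(s,t'), w_{(2,1)}=(s',t), w_{(2,2)}=(s',t'). -/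
/-!
Separate exchangeability gives any two distinct rows of `ω` the same joint law, and likewise any
two distinct columns. So for bounded `F`, `G`, summing `F` over `n` fresh rows and `G` over `n`
other fresh rows gives two vectors of `L²(μ)` with inner product `n² ∫ F(row s) G(row s')` and
squared norms `n² ∫ F(row s) F(row s') + O(n)`. Cauchy–Schwarz and `n → ∞` then give
`(∫ F(row s) G(row s'))² ≤ (∫ F(row s) F(row s')) (∫ G(row s) G(row s'))` although the rows need
not be independent. Doubling the rows and then the columns bounds the fourth power of the mixed
box integral by the product of the box integrals of `f`, `g`, `h`, `ℓ`.
-/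

open MeasureTheory Filter Topology Finset ProbabilityTheory
open scoped InnerProductSpace

section InnerProduct

variable {E : Type*} [NormedAddCommGroup E] [InnerProductSpace ℝ E]

theorem norm_sum_range_sq_le {u : ℕ → E} {C P : ℝ} (hu : ∀ i, ‖u i‖ ≤ C)
    (hP : ∀ i j, i ≠ j → ⟪u i, u j⟫_ℝ = P) (n : ℕ) :
    ‖∑ i ∈ range n, u i‖ ^ 2 ≤ n * C ^ 2 + ((n : ℝ) ^ 2 - n) * P := by
  have hrow : ∀ i ∈ range n, ⟪u i, ∑ j ∈ range n, u j⟫_ℝ ≤ C ^ 2 + (n - 1) * P := by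
    intro i hi
    rw [inner_sum, ← add_sum_erase _ _ hi,
      sum_congr rfl fun j hj => hP i j (ne_of_mem_erase hj).symm, sum_const,
      card_erase_of_mem hi, card_range, real_inner_self_eq_norm_sq, nsmul_eq_mul,
      Nat.cast_pred (Nat.zero_lt_of_lt (mem_range.1 hi))]
    gcongr
    exact hu i
  calc ‖∑ i ∈ range n, u i‖ ^ 2 = ∑ i ∈ range n, ⟪u i, ∑ j ∈ range n, u j⟫_ℝ := by
        rw [← real_inner_self_eq_norm_sq, sum_inner]
    _ ≤ ∑ _i ∈ range n, (C ^ 2 + (n - 1) * P) := sum_le_sum hrow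
    _ = n * C ^ 2 + ((n : ℝ) ^ 2 - n) * P := by rw [sum_const, card_range, nsmul_eq_mul]; ring

theorem inner_sum_range_sum_range_of_inner_eq {u v : ℕ → E} {J : ℝ}
    (hJ : ∀ i j, ⟪u i, v j⟫_ℝ = J) (n : ℕ) :
    ⟪∑ i ∈ range n, u i, ∑ j ∈ range n, v j⟫_ℝ = (n : ℝ) ^ 2 * J := by
  simp only [sum_inner, inner_sum, hJ, sum_const, card_range, nsmul_eq_mul]
  ring

theorem tendsto_add_div_natCast (P c : ℝ) :
    Tendsto (fun n : ℕ => P + c / n) atTop (𝓝 P) := by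
  simpa using tendsto_const_nhds.add (tendsto_const_div_atTop_nhds_zero_nat c)

theorem nonneg_of_inner_eq_of_norm_le {u : ℕ → E} {C P : ℝ} (hu : ∀ i, ‖u i‖ ≤ C)
    (hP : ∀ i j, i ≠ j → ⟪u i, u j⟫_ℝ = P) : 0 ≤ P := by
  refine ge_of_tendsto (tendsto_add_div_natCast P (C ^ 2 - P))
    (eventually_atTop.2 ⟨1, fun n hn => ?_⟩)
  have hn : (0 : ℝ) < n := by exact_mod_cast hn
  have h := (sq_nonneg _).trans (norm_sum_range_sq_le hu hP n)
  rw [add_div', le_div_iff₀ hn]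
  · nlinarith
  · exact hn.ne'

theorem sq_le_mul_of_inner_eq {u v : ℕ → E} {C D J P Q : ℝ} (hu : ∀ i, ‖u i‖ ≤ C)
    (hv : ∀ i, ‖v i‖ ≤ D) (hJ : ∀ i j, ⟪u i, v j⟫_ℝ = J)
    (hP : ∀ i j, i ≠ j → ⟪u i, u j⟫_ℝ = P) (hQ : ∀ i j, i ≠ j → ⟪v i, v j⟫_ℝ = Q) :
    J ^ 2 ≤ P * Q := by
  refine ge_of_tendsto ((tendsto_add_div_natCast P (C ^ 2 - P)).mul
    (tendsto_add_div_natCast Q (D ^ 2 - Q))) (eventually_atTop.2 ⟨1, fun n hn => ?_⟩)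
  have hn : (0 : ℝ) < n := by exact_mod_cast hn
  have hcs := real_inner_mul_inner_self_le (∑ i ∈ range n, u i) (∑ j ∈ range n, v j)
  rw [inner_sum_range_sum_range_of_inner_eq hJ, real_inner_self_eq_norm_sq,
    real_inner_self_eq_norm_sq] at hcs
  have hx := norm_sum_range_sq_le hu hP n
  have hy := norm_sum_range_sq_le hv hQ n
  have key : ((n : ℝ) ^ 2 * J) ^ 2 ≤ (n * C ^ 2 + ((n : ℝ) ^ 2 - n) * P) *
      (n * D ^ 2 + ((n : ℝ) ^ 2 - n) * Q) := by
    rw [sq]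
    exact hcs.trans (mul_le_mul hx hy (sq_nonneg _) ((sq_nonneg _).trans hx))
  have e : (n * C ^ 2 + ((n : ℝ) ^ 2 - n) * P) * (n * D ^ 2 + ((n : ℝ) ^ 2 - n) * Q) =
      (n : ℝ) ^ 4 * ((P + (C ^ 2 - P) / n) * (Q + (D ^ 2 - Q) / n)) := by
    field_simp; ring
  rw [e] at key
  exact le_of_mul_le_mul_left (by linarith) (by positivity : (0 : ℝ) < n ^ 4)

end InnerProduct

theorem inner_toLp_toLp {Ω : Type*} [MeasurableSpace Ω] {μ : Measure Ω} {φ ψ : Ω → ℝ}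
    (hφ : MemLp φ 2 μ) (hψ : MemLp ψ 2 μ) :
    ⟪hφ.toLp φ, hψ.toLp ψ⟫_ℝ = ∫ ω, φ ω * ψ ω ∂μ := by
  rw [L2.inner_def]
  refine integral_congr_ae ?_
  filter_upwards [hφ.coeFn_toLp, hψ.coeFn_toLp] with ω h₁ h₂
  simp [h₁, h₂, mul_comm]

theorem norm_toLp_le_of_abs_le {Ω : Type*} [MeasurableSpace Ω] {μ : Measure Ω}
    [IsProbabilityMeasure μ] {p : ENNReal} [Fact (1 ≤ p)] {φ : Ω → ℝ} (hφ : MemLp φ p μ) {C : ℝ}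
    (hC : ∀ ω, |φ ω| ≤ C) : ‖hφ.toLp φ‖ ≤ C := by
  obtain ⟨ω₀⟩ := nonempty_of_isProbabilityMeasure μ
  have hbound : ∀ᵐ ω ∂μ, ‖hφ.toLp φ ω‖ ≤ C := by
    filter_upwards [hφ.coeFn_toLp] with ω hω
    simpa [hω] using hC ω
  simpa [measureUnivNNReal] using
    Lp.norm_le_of_ae_bound ((abs_nonneg _).trans (hC ω₀)) hbound

section PairwiseIdentDistrib

variable {Ω S β : Type*} [MeasurableSpace Ω] [MeasurableSpace β] {μ : Measure Ω}
  {X : S → Ω → β} {s s' : S}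

theorem integral_mul_comp_eq_of_identDistrib
    (hX : ∀ a b, a ≠ b → IdentDistrib (fun ω => (X a ω, X b ω)) (fun ω => (X s ω, X s' ω)) μ μ)
    {F G : β → ℝ} (hF : Measurable F) (hG : Measurable G) {a b : S} (hab : a ≠ b) :
    ∫ ω, F (X a ω) * G (X b ω) ∂μ = ∫ ω, F (X s ω) * G (X s' ω) ∂μ :=
  ((hX a b hab).comp ((hF.comp measurable_fst).mul (hG.comp measurable_snd))).integral_eq

theorem memLp_comp_of_identDistrib [Nontrivial S] [IsFiniteMeasure μ]
    (hX : ∀ a b, a ≠ b → IdentDistrib (fun ω => (X a ω, X b ω)) (fun ω => (X s ω, X s' ω)) μ μ)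
    {F : β → ℝ} (hF : Measurable F) {C : ℝ} (hC : ∀ x, |F x| ≤ C) (p : ENNReal) (a : S) :
    MemLp (fun ω => F (X a ω)) p μ := by
  obtain ⟨b, hab⟩ := exists_ne a
  have hXa : AEMeasurable (X a) μ := (hX a b hab.symm).aemeasurable_fst.fst
  exact .of_bound (hF.comp_aemeasurable hXa).aestronglyMeasurable C (ae_of_all _ fun ω => hC _)

theorem integral_mul_comp_nonneg_of_identDistrib [Infinite S] [IsProbabilityMeasure μ]
    (hX : ∀ a b, a ≠ b → IdentDistrib (fun ω => (X a ω, X b ω)) (fun ω => (X s ω, X s' ω)) μ μ)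
    {F : β → ℝ} (hF : Measurable F) (hFb : ∃ C, ∀ x, |F x| ≤ C) :
    0 ≤ ∫ ω, F (X s ω) * F (X s' ω) ∂μ := by
  obtain ⟨C, hC⟩ := hFb
  have hL2 := memLp_comp_of_identDistrib hX hF hC 2
  let r := Infinite.natEmbedding S
  exact nonneg_of_inner_eq_of_norm_le (u := fun i => (hL2 (r i)).toLp _)
    (fun i => norm_toLp_le_of_abs_le _ fun ω => hC _) fun i j hij => by
      rw [inner_toLp_toLp, integral_mul_comp_eq_of_identDistrib hX hF hF (r.injective.ne hij)]

theorem sq_integral_mul_comp_le_of_identDistrib [Infinite S] [IsProbabilityMeasure μ]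
    (hX : ∀ a b, a ≠ b → IdentDistrib (fun ω => (X a ω, X b ω)) (fun ω => (X s ω, X s' ω)) μ μ)
    {F G : β → ℝ} (hF : Measurable F) (hG : Measurable G) (hFb : ∃ C, ∀ x, |F x| ≤ C)
    (hGb : ∃ C, ∀ x, |G x| ≤ C) :
    (∫ ω, F (X s ω) * G (X s' ω) ∂μ) ^ 2 ≤
      (∫ ω, F (X s ω) * F (X s' ω) ∂μ) * ∫ ω, G (X s ω) * G (X s' ω) ∂μ := by
  obtain ⟨C, hC⟩ := hFb
  obtain ⟨D, hD⟩ := hGb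
  have hFL2 := memLp_comp_of_identDistrib hX hF hC 2
  have hGL2 := memLp_comp_of_identDistrib hX hG hD 2
  let r := Infinite.natEmbedding S
  have hr : ∀ {i j}, i ≠ j → r i ≠ r j := r.injective.ne
  -- `F` lives on the even rows and `G` on the odd ones, so all the pairs that occur are distinct.
  refine sq_le_mul_of_inner_eq (u := fun i => (hFL2 (r (2 * i))).toLp _)
    (v := fun j => (hGL2 (r (2 * j + 1))).toLp _)
    (fun i => norm_toLp_le_of_abs_le _ fun ω => hC _)
    (fun j => norm_toLp_le_of_abs_le _ fun ω => hD _) (fun i j => ?_) (fun i j hij => ?_)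
    (fun i j hij => ?_) <;>
  rw [inner_toLp_toLp, integral_mul_comp_eq_of_identDistrib hX ‹_› ‹_› (hr (by omega))]

end PairwiseIdentDistrib

theorem Equiv.Perm.exists_finite_apply_eq_and_apply_eq {α : Type*} {s s' a b : α} (hss : s ≠ s')
    (hab : a ≠ b) : ∃ g : Equiv.Perm α, {x | g x ≠ x}.Finite ∧ g s = a ∧ g s' = b := by
  classical
  set s'' := Equiv.swap s a s'
  have ha : a ≠ s'' := fun h => hss <| (Equiv.swap s a).injective (by simp [s'', ← h])
  refine ⟨Equiv.swap s'' b * Equiv.swap s a, ?_, by simp [Equiv.swap_apply_of_ne_of_ne ha hab],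
    by simp [s'']⟩
  refine ((finite_compl_fixedBy_swap (x := s'') (y := b)).union
    (finite_compl_fixedBy_swap (x := s) (y := a))).subset ?_
  rw [← Set.compl_inter]
  exact fun x hx hfix => hx (MulAction.fixedBy_mul α _ _ hfix)

theorem ProbabilityTheory.IdentDistrib.of_measurePreserving {Ω γ : Type*} [MeasurableSpace Ω]
    [MeasurableSpace γ] {μ : Measure Ω} {T : Ω → Ω} (hT : MeasurePreserving T μ μ) {Y : Ω → γ}
    (hY : Measurable Y) : IdentDistrib (Y ∘ T) Y μ μ where
  aemeasurable_fst := (hY.comp hT.measurable).aemeasurable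
  aemeasurable_snd := hY.aemeasurable
  map_eq := by rw [← Measure.map_map hY hT.measurable, hT.map_eq]

theorem exists_abs_mul_comp_le {α β γ : Type*} {f : β → ℝ} {g : γ → ℝ} (u : α → β) (v : α → γ)
    (hf : ∃ C, ∀ y, |f y| ≤ C) (hg : ∃ C, ∀ z, |g z| ≤ C) : ∃ C, ∀ x, |f (u x) * g (v x)| ≤ C := by
  obtain ⟨C, hC⟩ := hf
  obtain ⟨D, hD⟩ := hg
  exact ⟨C * D, fun x => by
    rw [abs_mul]; exact mul_le_mul (hC _) (hD _) (abs_nonneg _) ((abs_nonneg _).trans (hC (u x)))⟩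

section Box

variable {S₁ S₂ K : Type*} [MeasurableSpace K] {μ : Measure (S₁ × S₂ → K)}

theorem identDistrib_rows
    (hμ₁ : ∀ g₁ : Equiv.Perm S₁, {x | g₁ x ≠ x}.Finite →
      Measure.map (fun (ω : S₁ × S₂ → K) (p : S₁ × S₂) => ω (g₁ p.1, p.2)) μ = μ)
    {s s' a b : S₁} (hss : s ≠ s') (hab : a ≠ b) :
    IdentDistrib (fun ω => (fun t => ω (a, t), fun t => ω (b, t)))
      (fun ω => (fun t => ω (s, t), fun t => ω (s', t))) μ μ := by
  obtain ⟨g, hg, rfl, rfl⟩ := Equiv.Perm.exists_finite_apply_eq_and_apply_eq hss hab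
  exact .of_measurePreserving (Y := fun ω => (fun t => ω (s, t), fun t => ω (s', t)))
    ⟨by fun_prop, hμ₁ g hg⟩ (by fun_prop)

theorem identDistrib_cols
    (hμ₂ : ∀ g₂ : Equiv.Perm S₂, {x | g₂ x ≠ x}.Finite →
      Measure.map (fun (ω : S₁ × S₂ → K) (p : S₁ × S₂) => ω (p.1, g₂ p.2)) μ = μ)
    {t t' a b : S₂} (htt : t ≠ t') (hab : a ≠ b) :
    IdentDistrib (fun ω => (fun s => ω (s, a), fun s => ω (s, b)))
      (fun ω => (fun s => ω (s, t), fun s => ω (s, t'))) μ μ := by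
  obtain ⟨g, hg, rfl, rfl⟩ := Equiv.Perm.exists_finite_apply_eq_and_apply_eq htt hab
  exact .of_measurePreserving (Y := fun ω => (fun s => ω (s, t), fun s => ω (s, t')))
    ⟨by fun_prop, hμ₂ g hg⟩ (by fun_prop)

noncomputable def boxIntegral (μ : Measure (S₁ × S₂ → K)) (f₁ f₂ f₃ f₄ : K → ℝ) (s s' : S₁)
    (t t' : S₂) : ℝ :=
  ∫ ω, f₁ (ω (s, t)) * f₂ (ω (s, t')) * f₃ (ω (s', t)) * f₄ (ω (s', t')) ∂μ

theorem boxIntegral_eq_integral_mul_cols (μ : Measure (S₁ × S₂ → K)) (f₁ f₂ f₃ f₄ : K → ℝ)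
    (s s' : S₁) (t t' : S₂) :
    boxIntegral μ f₁ f₂ f₃ f₄ s s' t t' =
      ∫ ω, f₁ (ω (s, t)) * f₃ (ω (s', t)) * (f₂ (ω (s, t')) * f₄ (ω (s', t'))) ∂μ := by
  unfold boxIntegral
  congr 1 with ω
  ring

variable [IsProbabilityMeasure μ] {f₁ f₂ f₃ f₄ : K → ℝ}

theorem sq_boxIntegral_le_rows [Infinite S₁]
    (hμ₁ : ∀ g₁ : Equiv.Perm S₁, {x | g₁ x ≠ x}.Finite →
      Measure.map (fun (ω : S₁ × S₂ → K) (p : S₁ × S₂) => ω (g₁ p.1, p.2)) μ = μ)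
    (hf₁ : Measurable f₁) (hf₂ : Measurable f₂) (hf₃ : Measurable f₃) (hf₄ : Measurable f₄)
    (hb₁ : ∃ C, ∀ x, |f₁ x| ≤ C) (hb₂ : ∃ C, ∀ x, |f₂ x| ≤ C)
    (hb₃ : ∃ C, ∀ x, |f₃ x| ≤ C) (hb₄ : ∃ C, ∀ x, |f₄ x| ≤ C)
    {s s' : S₁} (hss : s ≠ s') (t t' : S₂) :
    boxIntegral μ f₁ f₂ f₃ f₄ s s' t t' ^ 2 ≤
      boxIntegral μ f₁ f₂ f₁ f₂ s s' t t' * boxIntegral μ f₃ f₄ f₃ f₄ s s' t t' := by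
  have h := sq_integral_mul_comp_le_of_identDistrib (μ := μ) (X := fun a ω t => ω (a, t))
    (fun a b hab => identDistrib_rows hμ₁ hss hab)
    (F := fun x => f₁ (x t) * f₂ (x t')) (G := fun x => f₃ (x t) * f₄ (x t'))
    (by fun_prop) (by fun_prop) (exists_abs_mul_comp_le _ _ hb₁ hb₂)
    (exists_abs_mul_comp_le _ _ hb₃ hb₄)
  simpa only [boxIntegral, mul_assoc] using h

theorem sq_boxIntegral_le_cols [Infinite S₂]
    (hμ₂ : ∀ g₂ : Equiv.Perm S₂, {x | g₂ x ≠ x}.Finite →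
      Measure.map (fun (ω : S₁ × S₂ → K) (p : S₁ × S₂) => ω (p.1, g₂ p.2)) μ = μ)
    (hf₁ : Measurable f₁) (hf₂ : Measurable f₂) (hf₃ : Measurable f₃) (hf₄ : Measurable f₄)
    (hb₁ : ∃ C, ∀ x, |f₁ x| ≤ C) (hb₂ : ∃ C, ∀ x, |f₂ x| ≤ C)
    (hb₃ : ∃ C, ∀ x, |f₃ x| ≤ C) (hb₄ : ∃ C, ∀ x, |f₄ x| ≤ C)
    (s s' : S₁) {t t' : S₂} (htt : t ≠ t') :
    boxIntegral μ f₁ f₂ f₃ f₄ s s' t t' ^ 2 ≤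
      boxIntegral μ f₁ f₁ f₃ f₃ s s' t t' * boxIntegral μ f₂ f₂ f₄ f₄ s s' t t' := by
  simp only [boxIntegral_eq_integral_mul_cols]
  exact sq_integral_mul_comp_le_of_identDistrib (μ := μ) (X := fun b ω s => ω (s, b))
    (fun a b hab => identDistrib_cols hμ₂ htt hab)
    (F := fun y => f₁ (y s) * f₃ (y s')) (G := fun y => f₂ (y s) * f₄ (y s'))
    (by fun_prop) (by fun_prop) (exists_abs_mul_comp_le _ _ hb₁ hb₃)
    (exists_abs_mul_comp_le _ _ hb₂ hb₄)

theorem boxIntegral_self_nonneg [Infinite S₂]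
    (hμ₂ : ∀ g₂ : Equiv.Perm S₂, {x | g₂ x ≠ x}.Finite →
      Measure.map (fun (ω : S₁ × S₂ → K) (p : S₁ × S₂) => ω (p.1, g₂ p.2)) μ = μ)
    (hf₁ : Measurable f₁) (hb₁ : ∃ C, ∀ x, |f₁ x| ≤ C) (s s' : S₁) {t t' : S₂} (htt : t ≠ t') :
    0 ≤ boxIntegral μ f₁ f₁ f₁ f₁ s s' t t' := by
  rw [boxIntegral_eq_integral_mul_cols]
  exact integral_mul_comp_nonneg_of_identDistrib (μ := μ) (X := fun b ω s => ω (s, b))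
    (fun a b hab => identDistrib_cols hμ₂ htt hab) (F := fun y => f₁ (y s) * f₁ (y s'))
    (by fun_prop) (exists_abs_mul_comp_le _ _ hb₁ hb₁)

end Box

theorem abs_le_mul_rpow_of_sq_le_mul {J P Q F G H L : ℝ} (hJ : J ^ 2 ≤ P * Q)
    (hP : P ^ 2 ≤ F * G) (hQ : Q ^ 2 ≤ H * L) (hF : 0 ≤ F) (hG : 0 ≤ G) (hH : 0 ≤ H)
    (hL : 0 ≤ L) :
    |J| ≤ F ^ ((1 : ℝ) / 4) * G ^ ((1 : ℝ) / 4) * H ^ ((1 : ℝ) / 4) * L ^ ((1 : ℝ) / 4) := by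
  have h4 : |J| ^ 4 ≤ F * G * H * L :=
    calc |J| ^ 4 = (J ^ 2) ^ 2 := by rw [← sq_abs J]; ring
      _ ≤ (P * Q) ^ 2 := pow_le_pow_left₀ (sq_nonneg J) hJ 2
      _ = P ^ 2 * Q ^ 2 := mul_pow P Q 2
      _ ≤ F * G * (H * L) := mul_le_mul hP hQ (sq_nonneg Q) (mul_nonneg hF hG)
      _ = F * G * H * L := by ring
  calc |J| = (|J| ^ 4) ^ ((1 : ℝ) / 4) := by
        rw [← Real.rpow_natCast, ← Real.rpow_mul (abs_nonneg J)]; norm_num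
    _ ≤ (F * G * H * L) ^ ((1 : ℝ) / 4) := by gcongr
    _ = F ^ ((1 : ℝ) / 4) * G ^ ((1 : ℝ) / 4) * H ^ ((1 : ℝ) / 4) * L ^ ((1 : ℝ) / 4) := by
      rw [Real.mul_rpow (by positivity) hL, Real.mul_rpow (by positivity) hH, Real.mul_rpow hF hG]

theorem gowers_cauchy_schwarz_bipartite_general
    {S₁ S₂ : Type*} [Infinite S₁] [Infinite S₂]
    {K : Type*} [MeasurableSpace K]
    (μ : Measure (S₁ × S₂ → K)) [IsProbabilityMeasure μ]
    (hμ₁ : ∀ g₁ : Equiv.Perm S₁, {x | g₁ x ≠ x}.Finite →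
      Measure.map (fun (ω : S₁ × S₂ → K) (p : S₁ × S₂) => ω (g₁ p.1, p.2)) μ = μ)
    (hμ₂ : ∀ g₂ : Equiv.Perm S₂, {x | g₂ x ≠ x}.Finite →
      Measure.map (fun (ω : S₁ × S₂ → K) (p : S₁ × S₂) => ω (p.1, g₂ p.2)) μ = μ)
    (f g h ℓ : K → ℝ)
    (hfm : Measurable f) (hgm : Measurable g) (hhm : Measurable h) (hℓm : Measurable ℓ)
    (hfb : ∃ C, ∀ x, |f x| ≤ C) (hgb : ∃ C, ∀ x, |g x| ≤ C)
    (hhb : ∃ C, ∀ x, |h x| ≤ C) (hℓb : ∃ C, ∀ x, |ℓ x| ≤ C)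
    (s s' : S₁) (hss : s ≠ s') (t t' : S₂) (htt : t ≠ t') :
    |∫ ω, f (ω (s, t)) * g (ω (s, t')) * h (ω (s', t)) * ℓ (ω (s', t')) ∂μ|
      ≤ (∫ ω, f (ω (s, t)) * f (ω (s, t')) * f (ω (s', t)) * f (ω (s', t')) ∂μ) ^ ((1:ℝ)/4)
        * (∫ ω, g (ω (s, t)) * g (ω (s, t')) * g (ω (s', t)) * g (ω (s', t')) ∂μ) ^ ((1:ℝ)/4)
        * (∫ ω, h (ω (s, t)) * h (ω (s, t')) * h (ω (s', t)) * h (ω (s', t')) ∂μ) ^ ((1:ℝ)/4)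
        * (∫ ω, ℓ (ω (s, t)) * ℓ (ω (s, t')) * ℓ (ω (s', t)) * ℓ (ω (s', t')) ∂μ) ^ ((1:ℝ)/4) :=
  abs_le_mul_rpow_of_sq_le_mul
    (sq_boxIntegral_le_rows hμ₁ hfm hgm hhm hℓm hfb hgb hhb hℓb hss t t')
    (sq_boxIntegral_le_cols hμ₂ hfm hgm hfm hgm hfb hgb hfb hgb s s' htt)
    (sq_boxIntegral_le_cols hμ₂ hhm hℓm hhm hℓm hhb hℓb hhb hℓb s s' htt)
    (boxIntegral_self_nonneg hμ₂ hfm hfb s s' htt) (boxIntegral_self_nonneg hμ₂ hgm hgb s s' htt)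
    (boxIntegral_self_nonneg hμ₂ hhm hhb s s' htt) (boxIntegral_self_nonneg hμ₂ hℓm hℓb s s' htt)

/-- Gowers–Cauchy–Schwarz, bipartite case: for a separately exchangeable law `μ`
on `K^{S₁×S₂}` and bounded measurable `f, g, h, ℓ : K → ℝ`, with distinct `s ≠ s'` in `S₁` and
`t ≠ t'` in `S₂`,
`|∫ f(ω(s,t)) g(ω(s,t')) h(ω(s',t)) ℓ(ω(s',t')) dμ| ≤ ‖f‖_U ‖g‖_U ‖h‖_U ‖ℓ‖_U`,
where `‖f‖_U` is the fourth root of the corresponding Gowers box integral of `f`. -/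
theorem gowers_cauchy_schwarz_bipartite
    {S₁ S₂ : Type*} [Countable S₁] [Infinite S₁] [Countable S₂] [Infinite S₂]
    {K : Type*} [MeasurableSpace K]
    (μ : Measure (S₁ × S₂ → K)) [IsProbabilityMeasure μ]
    (hμ₁ : ∀ g₁ : Equiv.Perm S₁, {x | g₁ x ≠ x}.Finite →
      Measure.map (fun (ω : S₁ × S₂ → K) (p : S₁ × S₂) => ω (g₁ p.1, p.2)) μ = μ)
    (hμ₂ : ∀ g₂ : Equiv.Perm S₂, {x | g₂ x ≠ x}.Finite →
      Measure.map (fun (ω : S₁ × S₂ → K) (p : S₁ × S₂) => ω (p.1, g₂ p.2)) μ = μ)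
    (f g h ℓ : K → ℝ)
    (hfm : Measurable f) (hgm : Measurable g) (hhm : Measurable h) (hℓm : Measurable ℓ)
    (hfb : ∃ C, ∀ x, |f x| ≤ C) (hgb : ∃ C, ∀ x, |g x| ≤ C)
    (hhb : ∃ C, ∀ x, |h x| ≤ C) (hℓb : ∃ C, ∀ x, |ℓ x| ≤ C)
    (s s' : S₁) (hss : s ≠ s') (t t' : S₂) (htt : t ≠ t') :
    |∫ ω, f (ω (s, t)) * g (ω (s, t')) * h (ω (s', t)) * ℓ (ω (s', t')) ∂μ|
      ≤ (∫ ω, f (ω (s, t)) * f (ω (s, t')) * f (ω (s', t)) * f (ω (s', t')) ∂μ) ^ ((1:ℝ)/4)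
        * (∫ ω, g (ω (s, t)) * g (ω (s, t')) * g (ω (s', t)) * g (ω (s', t')) ∂μ) ^ ((1:ℝ)/4)
        * (∫ ω, h (ω (s, t)) * h (ω (s, t')) * h (ω (s', t)) * h (ω (s', t')) ∂μ) ^ ((1:ℝ)/4)
        * (∫ ω, ℓ (ω (s, t)) * ℓ (ω (s, t')) * ℓ (ω (s', t)) * ℓ (ω (s', t')) ∂μ) ^ ((1:ℝ)/4) :=
  gowers_cauchy_schwarz_bipartite_general μ hμ₁ hμ₂ f g h ℓ hfm hgm hhm hℓm hfb hgb hhb hℓb s s' hss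
    t t' htt
end
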